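/- For any TGICP I with M_1 ∩ M_2 = ∅ (no messages in common at the two senders), l*_q(I) = mrk_1 + mrk_2. -/

import Mathlib

open scoped Classical

/-- `A ≈ F_x`: the matrix `A` completes the fitting matrix of the SGICP with demand map `f`
and side-information sets `χ`, i.e. `A` equals `1` at every demand entry and `0` at every
entry which is neither a demand entry nor a side-information entry. -/
def Completes {K : Type*} [Field K] {R M : Type*} (f : R → M) (χ : R → Set M)
    (A : Matrix R M K) : Prop :=
  (∀ i, A i (f i) = 1) ∧ ∀ i j, j ≠ f i → j ∉ χ i → A i j = 0

/-- `mrk_q(F_x)`: the minrank over `K` of the SGICP with demand map `f` and side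
information `χ` — the minimum rank of a matrix completing its fitting matrix. -/
noncomputable def minrk (K : Type*) [Field K] {R M : Type*} [Fintype M]
    (f : R → M) (χ : R → Set M) : ℕ :=
  sInf {r | ∃ A : Matrix R M K, Completes f χ A ∧ A.rank = r}

/-- A two-sender groupcast index coding problem (TGICP) with `m` messages and `n` receivers.
Sender `j` holds the messages indexed by `Mj`, receiver `i` demands message `f i` and has
side information `χ i`; every message is demanded by at least one receiver. -/
structure TGICP (m n : ℕ) where
  /-- indices of the messages available at sender 1 -/
  M1 : Set (Fin m)
  /-- indices of the messages available at sender 2 -/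
  M2 : Set (Fin m)
  cover : M1 ∪ M2 = Set.univ
  /-- demand map -/
  f : Fin n → Fin m
  /-- side-information sets -/
  χ : Fin n → Set (Fin m)
  not_mem : ∀ i, f i ∉ χ i
  surj : ∀ j, ∃ i, f i = j

namespace TGICP

variable {m n : ℕ}

/-- `(G1, G2)` is a valid scalar linear two-sender index code over `K`: each receiver can
decode its demanded message from the two transmitted codewords together with its side
information. -/
def IsCode (I : TGICP m n) (K : Type*) [Field K] {l1 l2 : ℕ}
    (G1 : Matrix (Fin l1) ↥I.M1 K) (G2 : Matrix (Fin l2) ↥I.M2 K) : Prop :=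
  ∀ i : Fin n, ∃ D : (Fin l1 → K) → (Fin l2 → K) → (↥(I.χ i) → K) → K,
    ∀ x : Fin m → K,
      D (G1.mulVec fun j => x j.1) (G2.mulVec fun j => x j.1) (fun j => x j.1) = x (I.f i)

/-- `l*_q(I)`: the optimal (minimum) aggregate length of a scalar linear two-sender index
code for `I` over `K`. -/
noncomputable def optLen (I : TGICP m n) (K : Type*) [Field K] : ℕ :=
  sInf {L | ∃ (l1 l2 : ℕ) (G1 : Matrix (Fin l1) ↥I.M1 K) (G2 : Matrix (Fin l2) ↥I.M2 K),
    I.IsCode K G1 G2 ∧ L = l1 + l2}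

/-- The minrank over `K` of the single-sender sub-problem of `I` with message set `P`:
its receivers are those demanding a message in `P`, with side information restricted
to `P`. -/
noncomputable def mrk (I : TGICP m n) (K : Type*) [Field K] (P : Set (Fin m)) : ℕ :=
  minrk K (fun i : {i : Fin n // I.f i ∈ P} => (⟨I.f i.1, i.2⟩ : ↥P))
    (fun i => {j : ↥P | j.1 ∈ I.χ i.1})

end TGICP

section Aux

variable {K : Type*} [Field K] {m n : ℕ}

/-- Sum over a subtype of a function vanishing off the set equals the full sum. -/
lemma sum_coe_eq {S : Set (Fin m)} (g : Fin m → K) (hg : ∀ t, t ∉ S → g t = 0) :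
    ∑ j : ↥S, g j.1 = ∑ t : Fin m, g t := by
  rw [← Finset.sum_subtype S.toFinset (fun x => Set.mem_toFinset) g]
  refine Finset.sum_subset (Finset.subset_univ _) ?_
  intro t _ ht
  exact hg t (by simpa using ht)

/-- The set of ranks of completing matrices is nonempty. -/
lemma completes_nonempty {R M : Type*} [Fintype M] (f : R → M) (χ : R → Set M) :
    {r | ∃ A : Matrix R M K, Completes f χ A ∧ A.rank = r}.Nonempty := by
  classical
  refine ⟨_, (fun i j => if j = f i then 1 else 0 : Matrix R M K), ⟨?_, ?_⟩, rfl⟩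
  · intro i; simp
  · intro i j hj _; simp [hj]

/-- Lower bound, one sender: a valid two-sender code with sender-1 matrix of height `l1`
gives a completing matrix for sub-problem 1 of rank at most `l1`. -/
lemma lower_side {l1 l2 : ℕ} (f : Fin n → Fin m) (χ : Fin n → Set (Fin m))
    (S T : Set (Fin m)) (hfχ : ∀ i, f i ∉ χ i) (hST : ∀ t, t ∈ T → t ∉ S)
    (G1 : Matrix (Fin l1) ↥S K) (G2 : Matrix (Fin l2) ↥T K)
    (hcode : ∀ i : Fin n, ∃ D : (Fin l1 → K) → (Fin l2 → K) → (↥(χ i) → K) → K,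
      ∀ x : Fin m → K,
        D (G1.mulVec fun j => x j.1) (G2.mulVec fun j => x j.1) (fun j => x j.1) = x (f i)) :
    minrk K (fun i : {i : Fin n // f i ∈ S} => (⟨f i.1, i.2⟩ : ↥S))
      (fun i => {j : ↥S | j.1 ∈ χ i.1}) ≤ l1 := by
  classical
  -- functionals: rows of G1 and side-information coordinates
  set u : {i : Fin n // f i ∈ S} → (Fin l1 ⊕ ↥S) → ((↥S → K) →ₗ[K] K) := fun i =>
    Sum.elim (fun k => (LinearMap.proj k).comp G1.mulVecLin)
      (fun t => if t.1 ∈ χ i.1 then LinearMap.proj t else 0) with hu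
  have hspan : ∀ i : {i : Fin n // f i ∈ S},
      ∃ c : (Fin l1 ⊕ ↥S) → K,
        (∑ a, c a • u i a) = LinearMap.proj (R := K) (φ := fun _ : ↥S => K)
          (⟨f i.1, i.2⟩ : ↥S) := by
    intro i
    have hker : ⨅ a, LinearMap.ker (u i a) ≤
        LinearMap.ker (LinearMap.proj (R := K) (φ := fun _ : ↥S => K) (⟨f i.1, i.2⟩ : ↥S)) := by
      intro x hx
      simp only [Submodule.mem_iInf, LinearMap.mem_ker] at hx
      obtain ⟨D, hD⟩ := hcode i.1
      set X : Fin m → K := fun t => if h : t ∈ S then x ⟨t, h⟩ else 0 with hX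
      have h1 : (fun j : ↥S => X j.1) = x := by
        funext j; simp [hX]
      have h2 : (fun j : ↥T => X j.1) = 0 := by
        funext j; simp [hX, hST j.1 j.2]
      have h3 : (fun j : ↥(χ i.1) => X j.1) = 0 := by
        funext j
        by_cases hjS : j.1 ∈ S
        · have hz := hx (Sum.inr ⟨j.1, hjS⟩)
          simp only [hu, Sum.elim_inr, if_pos j.2, LinearMap.proj_apply] at hz
          simp [hX, hjS, hz]
        · simp [hX, hjS]
      have hG1 : G1.mulVec x = 0 := by
        funext k
        have hz := hx (Sum.inl k)
        simpa [hu] using hz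
      have e1 := hD X
      rw [h1, h2, h3, hG1, Matrix.mulVec_zero] at e1
      have e0 : D (G1.mulVec 0) (G2.mulVec 0) 0 = (0 : Fin m → K) (f i.1) := hD 0
      rw [Matrix.mulVec_zero, Matrix.mulVec_zero] at e0
      simp only [Pi.zero_apply] at e0
      have hXf : X (f i.1) = x ⟨f i.1, i.2⟩ := dif_pos i.2
      simp only [LinearMap.mem_ker, LinearMap.proj_apply]
      rw [← hXf, ← e1, e0]
    have hmem := mem_span_of_iInf_ker_le_ker hker
    exact (Submodule.mem_span_range_iff_exists_fun K).1 hmem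
  choose c hc using hspan
  -- the completing matrix
  set A : Matrix {i : Fin n // f i ∈ S} ↥S K :=
    (Matrix.of fun i k => c i (Sum.inl k)) * G1 with hA
  have hentry : ∀ (i : {i : Fin n // f i ∈ S}) (j : ↥S),
      A i j + (if j.1 ∈ χ i.1 then c i (Sum.inr j) else 0)
        = (Pi.single j (1 : K) : ↥S → K) (⟨f i.1, i.2⟩ : ↥S) := by
    intro i j
    have he := congrArg (fun ψ : (↥S → K) →ₗ[K] K => ψ (Pi.single j 1)) (hc i)
    simp only [LinearMap.coe_sum, Finset.sum_apply, LinearMap.smul_apply, smul_eq_mul,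
      LinearMap.proj_apply] at he
    rw [Fintype.sum_sum_type] at he
    have hfirst : ∀ k : Fin l1, c i (Sum.inl k) * (u i (Sum.inl k)) (Pi.single j 1)
        = c i (Sum.inl k) * G1 k j := by
      intro k
      simp [hu, Matrix.mulVecLin_apply, Matrix.mulVec_single_one]
    have hsecond : (∑ t : ↥S, c i (Sum.inr t) * (u i (Sum.inr t)) (Pi.single j 1))
        = if j.1 ∈ χ i.1 then c i (Sum.inr j) else 0 := by
      rw [Finset.sum_eq_single j]
      · by_cases hj : j.1 ∈ χ i.1 <;> simp [hu, hj]
      · intro t _ ht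
        by_cases htχ : t.1 ∈ χ i.1 <;> simp [hu, htχ, Pi.single_eq_of_ne ht]
      · intro habs; exact absurd (Finset.mem_univ j) habs
    rw [Finset.sum_congr rfl (fun k _ => hfirst k), hsecond] at he
    have hAij : A i j = ∑ k : Fin l1, c i (Sum.inl k) * G1 k j := by
      simp [hA, Matrix.mul_apply]
    rw [hAij]
    exact he
  have hcomp : Completes (fun i : {i : Fin n // f i ∈ S} => (⟨f i.1, i.2⟩ : ↥S))
      (fun i => {j : ↥S | j.1 ∈ χ i.1}) A := by
    constructor
    · intro i
      have := hentry i ⟨f i.1, i.2⟩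
      rw [if_neg (hfχ i.1), add_zero, Pi.single_eq_same] at this
      exact this
    · intro i j hj hjχ
      have hjχ' : j.1 ∉ χ i.1 := hjχ
      have := hentry i j
      rw [if_neg hjχ', add_zero, Pi.single_eq_of_ne (fun hh => hj hh.symm)] at this
      exact this
  have hrank : A.rank ≤ l1 := by
    calc A.rank ≤ G1.rank := Matrix.rank_mul_le_right _ _
    _ ≤ Fintype.card (Fin l1) := Matrix.rank_le_card_height _
    _ = l1 := Fintype.card_fin _
  exact le_trans (Nat.sInf_le ⟨A, hcomp, rfl⟩) hrank

/-- Upper bound, one sender: a completing matrix `A` for sub-problem on `S` yields a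
sender matrix with `A.rank` rows from which every receiver demanding a message in `S`
can decode. -/
lemma upper_side (f : Fin n → Fin m) (χ : Fin n → Set (Fin m)) (hfχ : ∀ i, f i ∉ χ i)
    (S : Set (Fin m)) (A : Matrix {i : Fin n // f i ∈ S} ↥S K)
    (hA : Completes (fun i : {i : Fin n // f i ∈ S} => (⟨f i.1, i.2⟩ : ↥S))
      (fun i => {j : ↥S | j.1 ∈ χ i.1}) A) :
    ∃ G : Matrix (Fin A.rank) ↥S K, ∀ i : Fin n, ∀ hi : f i ∈ S,
      ∃ D : (Fin A.rank → K) → (↥(χ i) → K) → K,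
        ∀ x : Fin m → K, D (G.mulVec fun j => x j.1) (fun j => x j.1) = x (f i) := by
  classical
  set W : Submodule K (↥S → K) := Submodule.span K (Set.range fun r => A r) with hW
  have hrk : Module.finrank K W = A.rank := by
    (rw [← A.rank_transpose, Matrix.rank, Matrix.range_mulVecLin]) <;> rfl
  set bb : Module.Basis (Fin A.rank) K W := Module.finBasisOfFinrankEq K W hrk with hbb
  refine ⟨Matrix.of fun k j => (bb k : ↥S → K) j, ?_⟩
  intro i hi
  set i' : {i : Fin n // f i ∈ S} := ⟨i, hi⟩ with hi'
  have hmem : A i' ∈ W := Submodule.subset_span ⟨i', rfl⟩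
  set c : Fin A.rank → K := fun k => bb.repr ⟨A i', hmem⟩ k with hcdef
  have hrepr : ∀ j : ↥S, A i' j = ∑ k, c k * (bb k : ↥S → K) j := by
    intro j
    have hsum := bb.sum_repr ⟨A i', hmem⟩
    have := congrArg (fun w : W => (w : ↥S → K) j) hsum
    simp only [AddSubmonoidClass.coe_finset_sum, Finset.sum_apply, Submodule.coe_smul,
      Pi.smul_apply, smul_eq_mul] at this
    exact this.symm
  -- coefficients of the side information part
  set aa : Fin m → K := fun t => if h : t ∈ S then A i' ⟨t, h⟩ else 0 with haa
  refine ⟨fun y s => (∑ k, c k * y k) - ∑ j : ↥(χ i), aa j.1 * s j, ?_⟩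
  intro x
  have hkey : (∑ k, c k * (Matrix.of fun k j => (bb k : ↥S → K) j).mulVec
      (fun j : ↥S => x j.1) k) = ∑ j : ↥S, A i' j * x j.1 := by
    simp only [Matrix.mulVec, dotProduct, Matrix.of_apply, Finset.mul_sum]
    rw [Finset.sum_comm]
    refine Finset.sum_congr rfl fun j _ => ?_
    rw [hrepr j, Finset.sum_mul]
    exact Finset.sum_congr rfl fun k _ => by ring
  beta_reduce
  rw [hkey]
  set bv : Fin m → K := fun t => if t ∈ χ i then aa t else 0 with hbv
  have sum1 : ∑ j : ↥S, A i' j * x j.1 = ∑ t : Fin m, aa t * x t := by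
    have h0 : ∀ j : ↥S, A i' j * x j.1 = aa j.1 * x j.1 := by
      intro j; simp only [haa, dif_pos j.2]
    rw [Finset.sum_congr rfl fun j _ => h0 j]
    exact sum_coe_eq (S := S) (fun t => aa t * x t)
      (fun t ht => by simp only [haa, dif_neg ht, zero_mul])
  have sum2 : ∑ j : ↥(χ i), aa j.1 * x j.1 = ∑ t : Fin m, bv t * x t := by
    have h0 : ∀ j : ↥(χ i), aa j.1 * x j.1 = bv j.1 * x j.1 := by
      intro j; simp only [hbv, if_pos j.2]
    rw [Finset.sum_congr rfl fun j _ => h0 j]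
    exact sum_coe_eq (S := χ i) (fun t => bv t * x t)
      (fun t ht => by simp only [hbv, if_neg ht, zero_mul])
  rw [sum1, sum2, ← Finset.sum_sub_distrib]
  have hpt : ∀ t : Fin m, aa t * x t - bv t * x t = if t = f i then x t else 0 := by
    intro t
    by_cases htf : t = f i
    · have h1 : aa t = 1 := by
        subst htf
        simp only [haa, dif_pos hi]
        exact hA.1 i'
      have h2 : bv t = 0 := by
        subst htf
        simp only [hbv, if_neg (hfχ i)]
      rw [h1, h2, if_pos htf]; ring
    · by_cases htχ : t ∈ χ i
      · have hb : bv t = aa t := by simp only [hbv, if_pos htχ]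
        rw [hb, if_neg htf]; ring
      · have h2 : bv t = 0 := by simp only [hbv, if_neg htχ]
        have h1 : aa t = 0 := by
          by_cases htS : t ∈ S
          · simp only [haa, dif_pos htS]
            refine hA.2 i' ⟨t, htS⟩ ?_ htχ
            intro hh
            exact htf (congrArg Subtype.val hh)
          · simp only [haa, dif_neg htS]
        rw [h1, h2, if_neg htf]; ring
  rw [Finset.sum_congr rfl fun t _ => hpt t]
  simp

end Aux

/-- Lemma 3.  For any TGICP `I` with `M1 ∩ M2 = ∅` (no messages in common
at the two senders), `l*_q(I) = mrk_1 + mrk_2`. -/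
theorem stmt7 (K : Type*) [Field K] [Fintype K] {m n : ℕ} (I : TGICP m n)
    (h : I.M1 ∩ I.M2 = ∅) :
    I.optLen K = I.mrk K (I.M1 \ I.M2) + I.mrk K (I.M2 \ I.M1) := by
  classical
  have hd12 : ∀ t, t ∈ I.M1 → t ∉ I.M2 := by
    intro t h1 h2
    have : t ∈ I.M1 ∩ I.M2 := ⟨h1, h2⟩
    rw [h] at this
    exact this
  have hd21 : ∀ t, t ∈ I.M2 → t ∉ I.M1 := fun t h2 h1 => hd12 t h1 h2
  have hM1 : I.M1 \ I.M2 = I.M1 := by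
    ext t; exact ⟨fun ht => ht.1, fun ht => ⟨ht, hd12 t ht⟩⟩
  have hM2 : I.M2 \ I.M1 = I.M2 := by
    ext t; exact ⟨fun ht => ht.1, fun ht => ⟨ht, hd21 t ht⟩⟩
  rw [hM1, hM2]
  -- obtain rank-minimizing completing matrices for the two sub-problems
  have hne1 := completes_nonempty (K := K)
    (fun i : {i : Fin n // I.f i ∈ I.M1} => (⟨I.f i.1, i.2⟩ : ↥I.M1))
    (fun i => {j : ↥I.M1 | j.1 ∈ I.χ i.1})
  have hne2 := completes_nonempty (K := K)
    (fun i : {i : Fin n // I.f i ∈ I.M2} => (⟨I.f i.1, i.2⟩ : ↥I.M2))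
    (fun i => {j : ↥I.M2 | j.1 ∈ I.χ i.1})
  have hm1 := Nat.sInf_mem hne1
  have hm2 := Nat.sInf_mem hne2
  obtain ⟨A1, hA1c, hA1r⟩ := hm1
  obtain ⟨A2, hA2c, hA2r⟩ := hm2
  have hA1r : A1.rank = I.mrk K I.M1 := hA1r
  have hA2r : A2.rank = I.mrk K I.M2 := hA2r
  obtain ⟨G1, hG1⟩ := upper_side I.f I.χ I.not_mem I.M1 A1 hA1c
  obtain ⟨G2, hG2⟩ := upper_side I.f I.χ I.not_mem I.M2 A2 hA2c
  have hcode : I.IsCode K G1 G2 := by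
    intro i
    have hcov : I.f i ∈ I.M1 ∪ I.M2 := by rw [I.cover]; trivial
    rcases hcov with hi | hi
    · obtain ⟨D, hD⟩ := hG1 i hi
      exact ⟨fun y1 _ s => D y1 s, fun x => hD x⟩
    · obtain ⟨D, hD⟩ := hG2 i hi
      exact ⟨fun _ y2 s => D y2 s, fun x => hD x⟩
  have hmemcode : A1.rank + A2.rank ∈ {L | ∃ (l1 l2 : ℕ) (G1 : Matrix (Fin l1) ↥I.M1 K)
      (G2 : Matrix (Fin l2) ↥I.M2 K), I.IsCode K G1 G2 ∧ L = l1 + l2} :=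
    ⟨A1.rank, A2.rank, G1, G2, hcode, rfl⟩
  refine le_antisymm ?_ ?_
  · calc I.optLen K ≤ A1.rank + A2.rank := Nat.sInf_le hmemcode
    _ = I.mrk K I.M1 + I.mrk K I.M2 := by rw [hA1r, hA2r]
  · refine le_csInf ⟨_, hmemcode⟩ ?_
    rintro L ⟨l1, l2, H1, H2, hHcode, rfl⟩
    have hb1 : I.mrk K I.M1 ≤ l1 :=
      lower_side I.f I.χ I.M1 I.M2 I.not_mem hd21 H1 H2 hHcode
    have hb2 : I.mrk K I.M2 ≤ l2 := by
      refine lower_side I.f I.χ I.M2 I.M1 I.not_mem hd12 H2 H1 ?_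
      intro i
      obtain ⟨D, hD⟩ := hHcode i
      exact ⟨fun y2 y1 s => D y1 y2 s, fun x => hD x⟩
    exact Nat.add_le_add hb1 hb2
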